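/- For any k ≥ 2, every local k-type Swap Schelling Game played on a tree admits a swap equilibrium: there exists a strategy profile in which no two adjacent agents of different colors can both strictly increase their utilities by exchanging vertices. -/

import Mathlib

/-! Root the tree at any vertex `r` and place the agents so that colors are non-decreasing in the
distance from `r`. Every vertex has at most one neighbor closer to `r` (its parent) and all other
neighbors are farther away. If a parent and a child of different colors swap, the agent moving
down has a strictly smaller color than the child it displaces, hence than every agent around its
new vertex: its utility drops to `0`, so the swap is never profitable for it. -/

open SimpleGraph Finset
open scoped Classical

noncomputable def ssgUtil {V A : Type*} [Fintype V] [DecidableEq V]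
    (G : SimpleGraph V) [DecidableRel G.Adj]
    {k : ℕ} (c : A → Fin k) (σ : A ≃ V) (i : A) : ℚ :=
  (((G.neighborFinset (σ i)).filter (fun v => c (σ.symm v) = c i)).card : ℚ) /
    (G.degree (σ i) : ℚ)

def ssgSwap {V A : Type*} [DecidableEq V] (σ : A ≃ V) (i j : A) : A ≃ V :=
  σ.trans (Equiv.swap (σ i) (σ j))

def ssgProfitable {V A : Type*} [Fintype V] [DecidableEq V]
    (G : SimpleGraph V) [DecidableRel G.Adj]
    {k : ℕ} (c : A → Fin k) (σ : A ≃ V) (i j : A) : Prop :=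
  c i ≠ c j ∧
    ssgUtil G c σ i < ssgUtil G c (ssgSwap σ i j) i ∧
    ssgUtil G c σ j < ssgUtil G c (ssgSwap σ i j) j

def ssgEquilibrium {V A : Type*} [Fintype V] [DecidableEq V]
    (G : SimpleGraph V) [DecidableRel G.Adj]
    {k : ℕ} (c : A → Fin k) (σ : A ≃ V) : Prop :=
  ∀ i j : A, ¬ ssgProfitable G c σ i j

def ssgLocalEquilibrium {V A : Type*} [Fintype V] [DecidableEq V]
    (G : SimpleGraph V) [DecidableRel G.Adj]
    {k : ℕ} (c : A → Fin k) (σ : A ≃ V) : Prop :=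
  ∀ i j : A, G.Adj (σ i) (σ j) → ¬ ssgProfitable G c σ i j

noncomputable def ssgWelfare {V A : Type*} [Fintype V] [DecidableEq V] [Fintype A]
    (G : SimpleGraph V) [DecidableRel G.Adj]
    {k : ℕ} (c : A → Fin k) (σ : A ≃ V) : ℚ :=
  ∑ i : A, ssgUtil G c σ i

noncomputable def ssgPhi {V A : Type*} [Fintype V] [DecidableEq V]
    (G : SimpleGraph V) [DecidableRel G.Adj]
    {k : ℕ} (c : A → Fin k) (σ : A ≃ V) : ℕ :=
  (G.edgeFinset.filter (fun e => ∀ u ∈ e, ∀ v ∈ e, c (σ.symm u) = c (σ.symm v))).card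

namespace SimpleGraph

variable {V : Type*} {G : SimpleGraph V}

lemma IsAcyclic.eq_penultimate_of_adj_of_dist_lt (hG : G.IsAcyclic) {u v w : V}
    {p : G.Walk u v} (hp : p.IsPath) (hvw : G.Adj v w) (hd : G.dist u w < G.dist u v) :
    w = p.penultimate := by
  obtain ⟨q, hq, hql⟩ := (p.reachable.trans hvw.reachable).exists_path_of_dist
  -- otherwise `q` would be `p` followed by the edge `vw`, longer than `dist u v`
  have hv : v ∉ q.support := by
    intro hv
    have hlen := congrArg Walk.length (hG.path_concat hp hq hvw hv)
    have := G.dist_le p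
    rw [Walk.length_concat, hql] at hlen
    omega
  exact hG.eq_penultimate_of_adj_end hp hvw
    (hG.mem_support_of_ne_mem_support_of_adj_of_isPath hp hq hvw hv)

lemma IsTree.eq_of_adj_of_dist_lt (hG : G.IsTree) (u : V) {v w₁ w₂ : V}
    (h₁ : G.Adj v w₁) (h₂ : G.Adj v w₂)
    (hd₁ : G.dist u w₁ < G.dist u v) (hd₂ : G.dist u w₂ < G.dist u v) : w₁ = w₂ := by
  obtain ⟨p, hp, -⟩ := (hG.connected u v).exists_path_of_dist
  rw [hG.isAcyclic.eq_penultimate_of_adj_of_dist_lt hp h₁ hd₁,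
    hG.isAcyclic.eq_penultimate_of_adj_of_dist_lt hp h₂ hd₂]

end SimpleGraph

lemma exists_equiv_comonotone {A V α β : Type*} [Fintype A] [Fintype V]
    [LinearOrder α] [LinearOrder β] (h : Fintype.card A = Fintype.card V)
    (c : A → α) (key : V → β) :
    ∃ σ : A ≃ V, ∀ a b, key (σ a) < key (σ b) → c a ≤ c b := by
  let eA := Fintype.equivFin A
  let eV : V ≃ Fin (Fintype.card A) := Fintype.equivFinOfCardEq h.symm
  let τA := Tuple.sort (c ∘ eA.symm)
  let τV := Tuple.sort (key ∘ eV.symm)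
  let pos : A ≃ Fin (Fintype.card A) := eA.trans τA.symm
  refine ⟨pos.trans (τV.trans eV.symm), fun a b hab => ?_⟩
  have hpos : pos a < pos b := (Tuple.monotone_sort (key ∘ eV.symm)).reflect_lt hab
  simpa [pos, τA] using Tuple.monotone_sort (c ∘ eA.symm) hpos.le

section SwapSchelling

variable {V A : Type*} [DecidableEq V]

lemma ssgSwap_apply_left (σ : A ≃ V) (i j : A) : ssgSwap σ i j i = σ j := by
  simp [ssgSwap]

lemma ssgSwap_symm_apply (σ : A ≃ V) (i j : A) (v : V) :
    (ssgSwap σ i j).symm v = σ.symm (Equiv.swap (σ i) (σ j) v) := by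
  simp [ssgSwap, Equiv.symm_swap]

lemma ssgSwap_comm (σ : A ≃ V) (i j : A) : ssgSwap σ j i = ssgSwap σ i j := by
  rw [ssgSwap, ssgSwap, Equiv.swap_comm]

variable [Fintype V] {G : SimpleGraph V} [DecidableRel G.Adj] {k : ℕ} {c : A → Fin k} {σ : A ≃ V}

lemma ssgUtil_nonneg (i : A) : 0 ≤ ssgUtil G c σ i := by
  unfold ssgUtil
  positivity

lemma ssgUtil_eq_zero_of_forall_adj_ne {i : A}
    (h : ∀ w, G.Adj (σ i) w → c (σ.symm w) ≠ c i) : ssgUtil G c σ i = 0 := by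
  have hempty : (G.neighborFinset (σ i)).filter (fun v => c (σ.symm v) = c i) = ∅ :=
    Finset.filter_eq_empty_iff.mpr fun w hw => h w ((G.mem_neighborFinset _ _).mp hw)
  simp [ssgUtil, hempty]

variable {β : Type*} [LinearOrder β] {key : V → β}

lemma ssgUtil_ssgSwap_eq_zero
    (hparent : ∀ v w₁ w₂, G.Adj v w₁ → G.Adj v w₂ → key w₁ < key v → key w₂ < key v → w₁ = w₂)
    (hadj : ∀ v w, G.Adj v w → key v ≠ key w)
    (hσ : ∀ a b, key (σ a) < key (σ b) → c a ≤ c b)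
    {i j : A} (hij : G.Adj (σ i) (σ j)) (hne : c i ≠ c j) (hlt : key (σ i) < key (σ j)) :
    ssgUtil G c (ssgSwap σ i j) i = 0 := by
  have hci : c i < c j := lt_of_le_of_ne (hσ i j hlt) hne
  refine ssgUtil_eq_zero_of_forall_adj_ne fun w hw => ?_
  rw [ssgSwap_apply_left] at hw
  rw [ssgSwap_symm_apply]
  by_cases hwi : w = σ i
  · rw [hwi, Equiv.swap_apply_left, Equiv.symm_apply_apply]
    exact hne.symm
  · rw [Equiv.swap_apply_of_ne_of_ne hwi hw.ne']
    have hkey : key (σ j) < key (σ (σ.symm w)) := by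
      rw [Equiv.apply_symm_apply]
      refine lt_of_le_of_ne (not_lt.mp fun hw_lt => hwi ?_) (hadj _ _ hw)
      exact hparent _ _ _ hw hij.symm hw_lt hlt
    exact (hci.trans_le (hσ j _ hkey)).ne'

lemma ssgLocalEquilibrium_of_comonotone
    (hparent : ∀ v w₁ w₂, G.Adj v w₁ → G.Adj v w₂ → key w₁ < key v → key w₂ < key v → w₁ = w₂)
    (hadj : ∀ v w, G.Adj v w → key v ≠ key w)
    (hσ : ∀ a b, key (σ a) < key (σ b) → c a ≤ c b) :
    ssgLocalEquilibrium G c σ := by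
  rintro i j hij ⟨hne, hi, hj⟩
  rcases lt_or_gt_of_ne (hadj _ _ hij) with hlt | hgt
  · rw [ssgUtil_ssgSwap_eq_zero hparent hadj hσ hij hne hlt] at hi
    exact hi.not_ge (ssgUtil_nonneg i)
  · rw [← ssgSwap_comm, ssgUtil_ssgSwap_eq_zero hparent hadj hσ hij.symm hne.symm hgt] at hj
    exact hj.not_ge (ssgUtil_nonneg j)

end SwapSchelling

theorem stmt4_general {V A : Type*} [Fintype V] [DecidableEq V]
    (G : SimpleGraph V) [DecidableRel G.Adj] (htree : G.IsTree)
    {k : ℕ} (c : A → Fin k) (hbij : Nonempty (A ≃ V)) :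
    ∃ σ : A ≃ V, ssgLocalEquilibrium G c σ := by
  obtain ⟨e⟩ := hbij
  have : Fintype A := Fintype.ofEquiv V e.symm
  obtain ⟨r⟩ := htree.connected.nonempty
  obtain ⟨σ, hσ⟩ := exists_equiv_comonotone (Fintype.card_congr e) c (G.dist r)
  exact ⟨σ, ssgLocalEquilibrium_of_comonotone (fun _ _ _ => htree.eq_of_adj_of_dist_lt r)
    (fun _ _ => htree.dist_ne_of_adj r) hσ⟩

theorem stmt4 {V A : Type*} [Fintype V] [DecidableEq V]
    (G : SimpleGraph V) [DecidableRel G.Adj] (htree : G.IsTree)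
    {k : ℕ} (hk : 2 ≤ k) (c : A → Fin k) (hbij : Nonempty (A ≃ V)) :
    ∃ σ : A ≃ V, ssgLocalEquilibrium G c σ :=
  stmt4_general G htree c hbij
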